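/- arXiv:2601.04637 — 2 statements merged into one kernel-verified Lean document; each statement's English description precedes it below -/
import Mathlib

section
/- Every planar multigraph M on n ≥ 1 vertices admitting a plane embedding without 2-faces satisfies a(M) ≥ n/4 + 3/10. -/
/-! Basic theory of finite multigraphs (parallel edges allowed, no loops),
induced forests, and combinatorial plane embeddings (rotation systems of
genus zero together with a nesting of components, à la Heffter–Edmonds). -/

structure Multigraph (V : Type) where
  mult : V → V → ℕ
  symm : ∀ u v, mult u v = mult v u
  loopless : ∀ v, mult v v = 0

namespace Multigraph

variable {V : Type}

/-- The underlying simple graph: adjacency iff at least one edge. -/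
def support (M : Multigraph V) : SimpleGraph V where
  Adj u v := 0 < M.mult u v
  symm := by
    constructor
    intro u v h
    rw [M.symm]; exact h
  loopless := by
    constructor
    intro v h
    rw [M.loopless] at h; exact lt_irrefl 0 h

/-- A vertex set induces a forest in a multigraph iff no two of its vertices are
joined by parallel edges (which would form a `2`-cycle) and the induced simple
graph is acyclic. -/
def IsInducedForest (M : Multigraph V) (S : Finset V) : Prop :=
  (∀ u ∈ S, ∀ v ∈ S, M.mult u v ≤ 1) ∧
    ((M.support.induce (S : Set V)).IsAcyclic)

/-- `a(M)`: the maximum number of vertices inducing a forest. -/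
noncomputable def forestNum (M : Multigraph V) : ℕ :=
  sSup {k | ∃ S : Finset V, M.IsInducedForest S ∧ S.card = k}

/-- The number of unordered pairs of vertices joined by parallel edges. -/
noncomputable def parallelPairs (M : Multigraph V) : ℕ :=
  Nat.card {p : Sym2 V // ∃ a b, p = s(a, b) ∧ 2 ≤ M.mult a b}

/-- The induced sub-multigraph on a set of vertices. -/
def induce (M : Multigraph V) (S : Set V) : Multigraph S where
  mult u v := M.mult u v
  symm := fun u v => M.symm u v
  loopless := fun v => M.loopless v

/-- Darts: an edge with a direction; the edges from `u` to `v` are indexed by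
`Fin (M.mult u v)`. -/
def Dart (M : Multigraph V) : Type :=
  Σ p : V × V, Fin (M.mult p.1 p.2)

instance dartFinite [Finite V] (M : Multigraph V) : Finite M.Dart := by
  have : Finite (Σ p : V × V, Fin (M.mult p.1 p.2)) := by infer_instance
  exact this

/-- Reversal of a dart. -/
def dartRev (M : Multigraph V) (d : M.Dart) : M.Dart :=
  ⟨(d.1.2, d.1.1), Fin.cast (M.symm d.1.1 d.1.2) d.2⟩

lemma dartRev_involutive (M : Multigraph V) : Function.Involutive M.dartRev := by
  rintro ⟨⟨u, v⟩, i⟩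
  simp [dartRev]
  rfl

/-- Reversal of darts as a permutation. -/
def revPerm (M : Multigraph V) : Equiv.Perm M.Dart :=
  Function.Involutive.toPerm _ (M.dartRev_involutive)

/-- The number of edges (each edge yields two darts). -/
noncomputable def edgeCount (M : Multigraph V) : ℕ := Nat.card M.Dart / 2

/-- The number of connected components. -/
noncomputable def components (M : Multigraph V) : ℕ :=
  Nat.card M.support.ConnectedComponent

/-- The number of connected components containing at least one edge. -/
noncomputable def edgeComponents (M : Multigraph V) : ℕ :=
  Nat.card {c : M.support.ConnectedComponent //
    ∃ d : M.Dart, M.support.connectedComponentMk d.1.1 = c}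

/-- The setoid of belonging to the same cycle of a permutation. -/
def cycleSetoid {β : Type*} (φ : Equiv.Perm β) : Setoid β :=
  ⟨φ.SameCycle, ⟨fun x => Equiv.Perm.SameCycle.refl φ x,
    fun h => h.symm, fun h1 h2 => h1.trans h2⟩⟩

/-- The face permutation of a rotation system: first reverse a dart, then rotate. -/
def facePerm (M : Multigraph V) (rot : Equiv.Perm M.Dart) : Equiv.Perm M.Dart :=
  (M.revPerm).trans rot

/-- Combinatorial faces (per connected component): orbits of the face permutation. -/
def Faces (M : Multigraph V) (rot : Equiv.Perm M.Dart) : Type :=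
  Quotient (cycleSetoid (M.facePerm rot))

instance facesFinite [Finite V] (M : Multigraph V) (rot : Equiv.Perm M.Dart) :
    Finite (M.Faces rot) := by
  have : Finite (Quotient (cycleSetoid (M.facePerm rot))) := Quotient.finite _
  exact this

/-- Connected components that contain at least one dart. -/
def DartComp (M : Multigraph V) : Type :=
  {c : M.support.ConnectedComponent // ∃ d : M.Dart, M.support.connectedComponentMk d.1.1 = c}

/-- The component in which a combinatorial face lives. -/
noncomputable def faceDartComp (M : Multigraph V) (rot : Equiv.Perm M.Dart) :
    M.Faces rot → M.DartComp :=
  fun F => ⟨M.support.connectedComponentMk F.out.1.1, ⟨F.out, rfl⟩⟩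

/-- A plane embedding of a multigraph: a rotation system whose combined Euler
characteristic is that of genus zero on every component, together with a choice
of the outer face of every component (with darts) and a well-founded nesting of
components in faces.  By the Heffter–Edmonds principle this data is exactly the
combinatorial description of an embedding into the plane. -/
structure PlaneEmbedding (M : Multigraph V) where
  rot : Equiv.Perm M.Dart
  rot_tail : ∀ d : M.Dart, (rot d).1.1 = d.1.1
  rot_cyclic : ∀ d e : M.Dart, d.1.1 = e.1.1 → rot.SameCycle d e
  outOrbit : M.DartComp → M.Faces rot
  outOrbit_comp : ∀ c, M.faceDartComp rot (outOrbit c) = c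
  encl : M.DartComp → Option (M.Faces rot)
  depth : M.DartComp → ℕ
  encl_depth : ∀ c F, encl c = some F → depth (M.faceDartComp rot F) < depth c
  euler : Nat.card V + Nat.card (M.Faces rot)
    = M.edgeCount + M.components + M.edgeComponents

/-- `M` is planar iff it has a plane embedding. -/
def IsPlanar (M : Multigraph V) : Prop := Nonempty M.PlaneEmbedding

namespace PlaneEmbedding

variable {M : Multigraph V}

/-- The merging relation identifying the outer combinatorial face of each
component with the face it is nested in (outermost components being merged
into the unbounded face `Sum.inl ()`). -/
def mergeRel (E : M.PlaneEmbedding) :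
    (Unit ⊕ M.Faces E.rot) → (Unit ⊕ M.Faces E.rot) → Prop :=
  fun x y => ∃ c, x = Sum.inr (E.outOrbit c) ∧
    y = Option.elim (E.encl c) (Sum.inl ()) Sum.inr

/-- The faces of the plane embedding: combinatorial faces merged along the
nesting (plus the unbounded face). -/
def PlaneFaces (E : M.PlaneEmbedding) : Type := Quot E.mergeRel

/-- The number of faces of the plane embedding. -/
noncomputable def numFaces (E : M.PlaneEmbedding) : ℕ := Nat.card E.PlaneFaces

/-- The degree of a face: the number of edge-side (= dart) incidences with it. -/
noncomputable def faceDeg (E : M.PlaneEmbedding) (Pf : E.PlaneFaces) : ℕ :=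
  Nat.card {d : M.Dart //
    Quot.mk E.mergeRel (Sum.inr (Quotient.mk (cycleSetoid (M.facePerm E.rot)) d)) = Pf}

/-- The embedding has no `2`-faces. -/
def NoTwoFaces (E : M.PlaneEmbedding) : Prop := ∀ Pf : E.PlaneFaces, E.faceDeg Pf ≠ 2

end PlaneEmbedding

end Multigraph

section
open Classical

/-- The multigraph associated with a simple graph (one edge per adjacency). -/
noncomputable def SimpleGraph.toMultigraph {V : Type} (G : SimpleGraph V) : Multigraph V where
  mult u v := if G.Adj u v then 1 else 0
  symm := by
    intro u v
    by_cases h : G.Adj u v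
    · simp [h, h.symm]
    · have h2 : ¬ G.Adj v u := fun h' => h h'.symm
      simp [h, h2]
  loopless := by intro v; simp

/-- The multigraph obtained from a simple graph by duplicating every edge. -/
noncomputable def SimpleGraph.doubleMultigraph {V : Type} (G : SimpleGraph V) : Multigraph V where
  mult u v := if G.Adj u v then 2 else 0
  symm := by
    intro u v
    by_cases h : G.Adj u v
    · simp [h, h.symm]
    · have h2 : ¬ G.Adj v u := fun h' => h h'.symm
      simp [h, h2]
  loopless := by intro v; simp

/-- An independent set in a simple graph. -/
def SimpleGraph.IsIndepFinset {V : Type} (G : SimpleGraph V) (S : Finset V) : Prop :=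
  ∀ u ∈ S, ∀ v ∈ S, ¬ G.Adj u v

/-- The independence number of a simple graph. -/
noncomputable def SimpleGraph.indepNumber {V : Type} (G : SimpleGraph V) : ℕ :=
  sSup {k | ∃ S : Finset V, G.IsIndepFinset S ∧ S.card = k}

/-- The disjoint union of `k` copies of `K₄`. -/
def cliquesUnion (k : ℕ) : SimpleGraph (Fin k × Fin 4) where
  Adj u v := u.1 = v.1 ∧ u.2 ≠ v.2
  symm := by
    constructor
    rintro u v ⟨h1, h2⟩
    exact ⟨h1.symm, h2.symm⟩
  loopless := by
    constructor
    rintro u ⟨h1, h2⟩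
    exact h2 rfl

/-- Deleting one of the parallel edges between `u` and `v`. -/
noncomputable def Multigraph.deleteParallel {V : Type} (M : Multigraph V) (u v : V) :
    Multigraph V where
  mult x y := if (x = u ∧ y = v) ∨ (x = v ∧ y = u) then M.mult x y - 1 else M.mult x y
  symm := by
    intro x y
    by_cases h : (x = u ∧ y = v) ∨ (x = v ∧ y = u)
    · have h' : (y = u ∧ x = v) ∨ (y = v ∧ x = u) := by tauto
      simp only [if_pos h, if_pos h', M.symm x y]
    · have h' : ¬((y = u ∧ x = v) ∨ (y = v ∧ x = u)) := by tauto
      simp only [if_neg h, if_neg h', M.symm x y]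
  loopless := by
    intro x
    by_cases h : (x = u ∧ x = v) ∨ (x = v ∧ x = u) <;> simp [h, M.loopless x]

end

/-! Order the vertices uniformly at random and keep every vertex having at most one edge to
earlier vertices. The kept vertices induce a forest: no kept vertex has a double edge to an
earlier vertex, and following a cycle to its latest vertex would give it two earlier neighbours.
A vertex `v` with `k` distinct neighbours, `s` of them joined to `v` by a single edge, is kept
when it comes first among its closed neighbourhood (probability `1/(k+1)`) or second, right after
one of those `s` neighbours (probability `s/(k(k+1))`); as `deg v ≥ 2k - s`, this is at least
`(12 - deg v)/24`. So some induced forest has at least `n/2 - D/24` vertices, `D` the number of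
darts. In a plane embedding without `2`-faces every face has at least three darts, and Euler's
formula gives `D ≤ 6n - 9` once there is an edge; hence `a(M) ≥ n/4 + 3/8`. -/

open Finset

namespace SimpleGraph

variable {W α : Type*} [LinearOrder α]

theorem isAcyclic_of_lt_adj_unique (G : SimpleGraph W) (r : W → α) (hr : Function.Injective r)
    (h : ∀ w a b, G.Adj w a → G.Adj w b → r a < r w → r b < r w → a = b) :
    G.IsAcyclic := by
  classical
  intro v c hc
  obtain ⟨w, hw, hmax⟩ := c.support.toFinset.exists_max_image r ⟨v, by simp⟩
  rw [List.mem_toFinset] at hw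
  set c' := c.rotate w hw
  have hc' : c'.IsCycle := hc.rotate hw
  have lt_of_adj : ∀ u ∈ c'.support, G.Adj w u → r u < r w := fun u hu hadj =>
    lt_of_le_of_ne (hmax u (by simpa [c'] using hu)) (hr.ne hadj.ne.symm)
  have hsnd := lt_of_adj _ (c'.getVert_mem_support 1) (Walk.adj_snd hc'.not_nil)
  have hpen := lt_of_adj _ (c'.getVert_mem_support _) (Walk.adj_penultimate hc'.not_nil).symm
  exact hc'.snd_ne_penultimate (h w _ _ (Walk.adj_snd hc'.not_nil)
    (Walk.adj_penultimate hc'.not_nil).symm hsnd hpen)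

end SimpleGraph

section RandomOrder

variable {V α : Type*} [LinearOrder α]

def IsFirstIn (f : V ≃ α) (A : Finset V) (a : V) : Prop := ∀ u ∈ A, f a ≤ f u

instance (f : V ≃ α) (A : Finset V) (a : V) : Decidable (IsFirstIn f A a) :=
  inferInstanceAs (Decidable (∀ u ∈ A, f a ≤ f u))

theorem IsFirstIn.unique {A : Finset V} {a b : V} {f : V ≃ α} (hfa : IsFirstIn f A a)
    (hfb : IsFirstIn f A b) (ha : a ∈ A) (hb : b ∈ A) : a = b :=
  f.injective (le_antisymm (hfa b hb) (hfb a ha))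

theorem card_eq_sum_card_filter_isFirstIn (B : Finset (V ≃ α)) {A : Finset V} (hA : A.Nonempty) :
    #B = ∑ a ∈ A, #{f ∈ B | IsFirstIn f A a} := by
  classical
  rw [← card_biUnion]
  · congr 1
    ext f
    simp only [mem_biUnion, mem_filter]
    constructor
    · intro hf
      obtain ⟨a, ha, hmin⟩ := A.exists_min_image f hA
      exact ⟨a, ha, hf, hmin⟩
    · rintro ⟨a, -, hf, -⟩
      exact hf
  · intro a ha b hb hab
    simp only [Function.onFun, disjoint_left, mem_filter]
    rintro f ⟨-, hfa⟩ ⟨-, hfb⟩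
    exact hab (hfa.unique hfb ha hb)

variable [DecidableEq V]

theorem swap_apply_mem_iff {A : Finset V} {a b u : V} (ha : a ∈ A) (hb : b ∈ A) :
    Equiv.swap a b u ∈ A ↔ u ∈ A := by
  rw [Equiv.swap_apply_def]
  split_ifs with h1 h2 <;> simp_all

theorem IsFirstIn.swap_trans {A : Finset V} {a b : V} {f : V ≃ α} (hf : IsFirstIn f A a)
    (ha : a ∈ A) (hb : b ∈ A) : IsFirstIn ((Equiv.swap a b).trans f) A b := fun u hu => by
  simpa using hf _ ((swap_apply_mem_iff ha hb).2 hu)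

theorem IsFirstIn.swap_trans_of_ne {A : Finset V} {a b c : V} {f : V ≃ α} (hf : IsFirstIn f A a)
    (hb : b ∈ A) (hc : c ∈ A) (hab : a ≠ b) (hac : a ≠ c) :
    IsFirstIn ((Equiv.swap b c).trans f) A a := fun u hu => by
  simpa [Equiv.swap_apply_of_ne_of_ne hab hac] using hf _ ((swap_apply_mem_iff hb hc).2 hu)

theorem card_filter_isFirstIn_eq (B : Finset (V ≃ α)) {A : Finset V} {a b : V}
    (ha : a ∈ A) (hb : b ∈ A) (hB : ∀ f ∈ B, (Equiv.swap a b).trans f ∈ B) :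
    #{f ∈ B | IsFirstIn f A a} = #{f ∈ B | IsFirstIn f A b} := by
  refine card_nbij' ((Equiv.swap a b).trans ·) ((Equiv.swap a b).trans ·)
    (fun f hf => ?_) (fun f hf => ?_) (fun f _ => ?_) (fun f _ => ?_)
  · simp only [mem_coe, mem_filter] at hf ⊢
    exact ⟨hB f hf.1, hf.2.swap_trans ha hb⟩
  · simp only [mem_coe, mem_filter] at hf ⊢
    exact ⟨hB f hf.1, Equiv.swap_comm a b ▸ hf.2.swap_trans hb ha⟩
  all_goals ext u; simp

theorem card_filter_isFirstIn_mul_card (B : Finset (V ≃ α)) {A : Finset V} {a : V} (ha : a ∈ A)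
    (hB : ∀ b ∈ A, ∀ c ∈ A, ∀ f ∈ B, (Equiv.swap b c).trans f ∈ B) :
    #{f ∈ B | IsFirstIn f A a} * #A = #B := by
  rw [card_eq_sum_card_filter_isFirstIn B ⟨a, ha⟩, sum_const_nat fun b hb =>
    (card_filter_isFirstIn_eq B ha hb (hB a ha b hb)).symm, mul_comm]

end RandomOrder

/-- `(k + s) / (k (k + 1)) ≥ (12 - (2k - s)) / 24`, with the denominators cleared. -/
theorem twelve_mul_add_le {k s : ℕ} (hs : s ≤ k) :
    12 * (k * (k + 1)) + s * (k * (k + 1)) ≤ 24 * (k + s) + 2 * k * (k * (k + 1)) := by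
  rcases Nat.lt_or_ge k 5 with hk | hk
  · interval_cases k <;> omega
  · have hk' : (5 : ℤ) ≤ k := by exact_mod_cast hk
    have hs' : (s : ℤ) ≤ k := by exact_mod_cast hs
    have hquad : 0 ≤ (k : ℤ) * k + k - 24 := by nlinarith
    have hcubic : 0 ≤ (k : ℤ) * (k * k - 11 * k + 36) :=
      mul_nonneg (by positivity) (by nlinarith [sq_nonneg (2 * (k : ℤ) - 11)])
    zify
    nlinarith [mul_le_mul_of_nonneg_right hs' hquad]

theorem twelve_mul_le_of_counts {N g c P k s d : ℕ} (hs : s ≤ k) (hd : 2 * k ≤ d + s)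
    (hc : c * (k + 1) = N) (hP : P * (k * (k + 1)) = s * N) (hg : c + P ≤ g) :
    12 * N ≤ 24 * g + N * d := by
  rcases Nat.eq_zero_or_pos k with rfl | hk
  · omega
  · have hkk : 0 < k * (k + 1) := by positivity
    refine Nat.le_of_mul_le_mul_left ?_ hkk
    have h1 := Nat.mul_le_mul_left N (twelve_mul_add_le hs)
    have h2 := Nat.mul_le_mul_left (k * (k + 1)) hg
    have h3 := Nat.mul_le_mul_left (N * (k * (k + 1))) hd
    have h4 : k * (k + 1) * c = k * N := by rw [← hc]; ring
    nlinarith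

namespace Multigraph

theorem card_le_forestNum {V : Type} [Finite V] (M : Multigraph V) {S : Finset V}
    (hS : M.IsInducedForest S) : #S ≤ M.forestNum := by
  have : Fintype V := Fintype.ofFinite V
  refine le_csSup ⟨Fintype.card V, ?_⟩ ⟨S, hS, rfl⟩
  rintro _ ⟨T, -, rfl⟩
  exact T.card_le_univ

variable {V : Type} {α : Type*} [Fintype V]

def degree (M : Multigraph V) (v : V) : ℕ := ∑ u, M.mult v u

theorem card_dart_eq_sum_degree (M : Multigraph V) : Nat.card M.Dart = ∑ v, M.degree v := by
  rw [Dart, Nat.card_eq_fintype_card, Fintype.card_sigma, Fintype.sum_prod_type]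
  simp [degree]

def neighborFinset (M : Multigraph V) (v : V) : Finset V := {u | 0 < M.mult v u}

theorem notMem_neighborFinset_self (M : Multigraph V) (v : V) : v ∉ M.neighborFinset v := by
  simp [neighborFinset, M.loopless]

theorem two_mul_card_neighborFinset_le (M : Multigraph V) (v : V) :
    2 * #(M.neighborFinset v) ≤ M.degree v + #{u | M.mult v u = 1} := by
  rw [neighborFinset, card_filter, card_filter, mul_sum, degree, ← sum_add_distrib]
  refine sum_le_sum fun u _ => ?_
  split_ifs <;> omega

variable [LinearOrder α]

def backDegree (M : Multigraph V) (f : V → α) (v : V) : ℕ := ∑ u with f u < f v, M.mult v u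

theorem mult_le_backDegree (M : Multigraph V) (f : V → α) {u v : V} (h : f u < f v) :
    M.mult v u ≤ M.backDegree f v :=
  single_le_sum (f := fun u => M.mult v u) (fun _ _ => Nat.zero_le _) (by simpa using h)

theorem backDegree_le_mult (M : Multigraph V) (f : V → α) {v x : V}
    (h : ∀ u, 0 < M.mult v u → u ≠ x → f v ≤ f u) : M.backDegree f v ≤ M.mult v x := by
  rw [← sum_singleton (fun u => M.mult v u) x, backDegree]
  refine sum_le_sum_of_ne_zero fun u hu hne => mem_singleton.2 ?_
  by_contra hux
  exact (mem_filter.1 hu).2.not_ge (h u (Nat.pos_of_ne_zero hne) hux)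

theorem isInducedForest_backDegree_le_one (M : Multigraph V) {f : V → α}
    (hf : Function.Injective f) : M.IsInducedForest {v | M.backDegree f v ≤ 1} := by
  have hS : ∀ {v}, v ∈ ({v | M.backDegree f v ≤ 1} : Finset V) → M.backDegree f v ≤ 1 :=
    fun hv => (mem_filter.1 hv).2
  refine ⟨fun u hu w hw => ?_, ?_⟩
  · rcases lt_trichotomy (f u) (f w) with h | h | h
    · rw [M.symm]; exact (M.mult_le_backDegree f h).trans (hS hw)
    · rw [hf h, M.loopless]; exact zero_le_one
    · exact (M.mult_le_backDegree f h).trans (hS hu)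
  · refine SimpleGraph.isAcyclic_of_lt_adj_unique _ (f ∘ Subtype.val)
      (hf.comp Subtype.val_injective) fun w a b ha hb haw hbw => ?_
    classical
    by_contra hab
    have hpair : M.mult w a + M.mult w b ≤ M.backDegree f w := by
      rw [← sum_pair (f := fun u => M.mult w u) (Subtype.coe_ne_coe.2 hab)]
      refine sum_le_sum_of_subset fun u hu => ?_
      rcases mem_insert.1 hu with rfl | hu
      · simpa using haw
      · rw [mem_singleton.1 hu]; simpa using hbw
    have : M.backDegree f w ≤ 1 := hS (mem_coe.1 w.2)
    change 0 < M.mult w a at ha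
    change 0 < M.mult w b at hb
    omega

section

variable [DecidableEq V] [Fintype α]

def closedNeighborFinset (M : Multigraph V) (v : V) : Finset V := insert v (M.neighborFinset v)

theorem self_mem_closedNeighborFinset (M : Multigraph V) (v : V) : v ∈ M.closedNeighborFinset v :=
  mem_insert_self v _

theorem mem_closedNeighborFinset_of_pos (M : Multigraph V) {v u : V} (h : 0 < M.mult v u) :
    u ∈ M.closedNeighborFinset v :=
  mem_insert_of_mem (mem_filter.2 ⟨mem_univ u, h⟩)

theorem card_closedNeighborFinset (M : Multigraph V) (v : V) :
    #(M.closedNeighborFinset v) = #(M.neighborFinset v) + 1 :=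
  card_insert_of_notMem (M.notMem_neighborFinset_self v)

theorem card_first_add_sum_card_second_le (M : Multigraph V) (v : V) :
    #{f : V ≃ α | IsFirstIn f (M.closedNeighborFinset v) v} +
        ∑ x with M.mult v x = 1,
          #{f ∈ {f : V ≃ α | IsFirstIn f (M.closedNeighborFinset v) x} |
            IsFirstIn f ((M.closedNeighborFinset v).erase x) v} ≤
      #{f : V ≃ α | M.backDegree f v ≤ 1} := by
  set A := M.closedNeighborFinset v
  have mem_A : ∀ u, 0 < M.mult v u → u ∈ A := fun _ => M.mem_closedNeighborFinset_of_pos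
  have simple_mem_A : ∀ x ∈ ({x | M.mult v x = 1} : Finset V), x ∈ A := fun x hx =>
    mem_A x ((mem_filter.1 hx).2 ▸ zero_lt_one)
  rw [← card_biUnion, ← card_union_of_disjoint]
  · refine card_le_card (union_subset ?_ (biUnion_subset.2 fun x hx => ?_)) <;>
      intro f hf <;> simp only [mem_filter, mem_univ, true_and] at hf ⊢
    · have := M.backDegree_le_mult (x := v) f fun u hu _ => hf u (mem_A u hu)
      rw [M.loopless] at this
      omega
    · rw [← (mem_filter.1 hx).2]
      exact M.backDegree_le_mult f fun u hu hux => hf.2 u (mem_erase.2 ⟨hux, mem_A u hu⟩)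
  · refine (disjoint_biUnion_right _ _ _).2 fun x hx => disjoint_left.2 fun f hfv hfx => ?_
    simp only [mem_filter, mem_univ, true_and] at hfv hfx
    have hxv := hfx.1.unique hfv (simple_mem_A x hx) (M.self_mem_closedNeighborFinset v)
    simp [hxv, M.loopless] at hx
  · intro x hx y hy hxy
    simp only [Function.onFun, disjoint_left, mem_filter, mem_univ, true_and]
    exact fun f hfx hfy => hxy (hfx.1.unique hfy.1 (simple_mem_A x hx) (simple_mem_A y hy))

theorem twelve_mul_card_equiv_le (M : Multigraph V) (v : V) :
    12 * Fintype.card (V ≃ α) ≤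
      24 * #{f : V ≃ α | M.backDegree f v ≤ 1} + Fintype.card (V ≃ α) * M.degree v := by
  set A := M.closedNeighborFinset v
  set k := #(M.neighborFinset v)
  set T : Finset V := {x | M.mult v x = 1}
  have hA : #A = k + 1 := M.card_closedNeighborFinset v
  have mem_A : ∀ x ∈ T, x ∈ A := fun x hx =>
    M.mem_closedNeighborFinset_of_pos ((mem_filter.1 hx).2 ▸ zero_lt_one)
  have first_mul :
      ∀ a ∈ A, #{f : V ≃ α | IsFirstIn f A a} * (k + 1) = Fintype.card (V ≃ α) := by
    intro a ha
    rw [← hA, ← card_univ]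
    exact card_filter_isFirstIn_mul_card univ ha fun _ _ _ _ _ _ => mem_univ _
  have second_mul : ∀ x ∈ T,
      #{f ∈ {f : V ≃ α | IsFirstIn f A x} | IsFirstIn f (A.erase x) v} * k =
        #{f : V ≃ α | IsFirstIn f A x} := by
    intro x hx
    have hvx : v ≠ x := by rintro rfl; simp [T, M.loopless] at hx
    have := card_filter_isFirstIn_mul_card {f : V ≃ α | IsFirstIn f A x} (A := A.erase x)
      (mem_erase.2 ⟨hvx, M.self_mem_closedNeighborFinset v⟩) fun b hb c hc f hf => by
        simp only [mem_filter, mem_univ, true_and] at hf ⊢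
        exact hf.swap_trans_of_ne (mem_of_mem_erase hb) (mem_of_mem_erase hc)
          (ne_of_mem_erase hb).symm (ne_of_mem_erase hc).symm
    rwa [card_erase_of_mem (mem_A x hx), hA, Nat.add_sub_cancel] at this
  have hsum : (∑ x ∈ T, #{f ∈ {f : V ≃ α | IsFirstIn f A x} |
      IsFirstIn f (A.erase x) v}) * (k * (k + 1)) = #T * Fintype.card (V ≃ α) := by
    rw [sum_mul, sum_const_nat fun x hx => by
      rw [← mul_assoc, second_mul x hx, first_mul x (mem_A x hx)]]
  have hTk : #T ≤ k := card_le_card fun x hx =>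
    mem_filter.2 ⟨mem_univ _, (mem_filter.1 hx).2 ▸ zero_lt_one⟩
  exact twelve_mul_le_of_counts hTk (M.two_mul_card_neighborFinset_le v)
    (first_mul v (M.self_mem_closedNeighborFinset v)) hsum (M.card_first_add_sum_card_second_le v)

end

theorem exists_isInducedForest_twelve_mul_card_le (M : Multigraph V) :
    ∃ S : Finset V, M.IsInducedForest S ∧ 12 * Nat.card V ≤ 24 * #S + Nat.card M.Dart := by
  classical
  let Ord := V ≃ Fin (Fintype.card V)
  have hdouble : ∑ v, #{f : Ord | M.backDegree f v ≤ 1} =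
      ∑ f : Ord, #{v | M.backDegree f v ≤ 1} :=
    sum_card_bipartiteAbove_eq_sum_card_bipartiteBelow _
  have hsum : ∑ _f : Ord, 12 * Fintype.card V ≤
      ∑ f : Ord, (24 * #{v | M.backDegree f v ≤ 1} + Nat.card M.Dart) := calc
    ∑ _f : Ord, 12 * Fintype.card V = ∑ _v : V, 12 * Fintype.card Ord := by
      simp only [sum_const, card_univ, smul_eq_mul]; ring
    _ ≤ ∑ v, (24 * #{f : Ord | M.backDegree f v ≤ 1} + Fintype.card Ord * M.degree v) :=
      sum_le_sum fun v _ => M.twelve_mul_card_equiv_le v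
    _ = ∑ f : Ord, (24 * #{v | M.backDegree f v ≤ 1} + Nat.card M.Dart) := by
      rw [sum_add_distrib, ← mul_sum, hdouble, ← mul_sum, ← card_dart_eq_sum_degree,
        sum_add_distrib, ← mul_sum, sum_const, card_univ, smul_eq_mul]
  obtain ⟨f, -, hf⟩ := exists_le_of_sum_le ⟨Fintype.equivFin V, mem_univ _⟩ hsum
  rw [Nat.card_eq_fintype_card (α := V)]
  exact ⟨_, M.isInducedForest_backDegree_le_one f.injective, hf⟩

end Multigraph

section FunctionalRelation

variable {X : Type*} (r : X → X → Prop)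

open Classical in
noncomputable def relRoot (μ : X → ℕ) (hμ : ∀ x y, r x y → μ y < μ x) (x : X) : X :=
  if h : ∃ y, r x y then relRoot μ hμ h.choose else x
termination_by μ x
decreasing_by exact hμ _ _ h.choose_spec

theorem relRoot_of_not_exists {μ : X → ℕ} {hμ : ∀ x y, r x y → μ y < μ x} {x : X}
    (h : ¬∃ y, r x y) : relRoot r μ hμ x = x := by
  rw [relRoot, dif_neg h]

theorem relRoot_eq_of_rel {μ : X → ℕ} {hμ : ∀ x y, r x y → μ y < μ x}
    (hfun : ∀ x y z, r x y → r x z → y = z) {x y : X} (hxy : r x y) :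
    relRoot r μ hμ x = relRoot r μ hμ y := by
  have h : ∃ y, r x y := ⟨y, hxy⟩
  rw [relRoot, dif_pos h, hfun x _ _ h.choose_spec hxy]

/-- A functional relation decreasing `μ` is a rooted forest; its roots, the elements without
an `r`-successor, represent distinct classes of the generated equivalence. -/
theorem card_le_card_quot_add_card (μ : X → ℕ) (hμ : ∀ x y, r x y → μ y < μ x)
    (hfun : ∀ x y z, r x y → r x z → y = z) [Finite X] :
    Nat.card X ≤ Nat.card (Quot r) + Nat.card {x // ∃ y, r x y} := by
  classical
  have hinj : Function.Injective fun x : {x // ¬∃ y, r x y} => Quot.mk r x.1 := by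
    intro x y hxy
    have := congrArg (Quot.lift (relRoot r μ hμ) fun _ _ => relRoot_eq_of_rel r hfun) hxy
    simp only [relRoot_of_not_exists r x.2, relRoot_of_not_exists r y.2] at this
    exact Subtype.ext this
  rw [← Nat.card_congr (Equiv.sumCompl fun x => ∃ y, r x y), Nat.card_sum, add_comm]
  exact Nat.add_le_add_right (Nat.card_le_card_of_injective _ hinj) _

end FunctionalRelation

namespace Multigraph.PlaneEmbedding

variable {V : Type} {M : Multigraph V} (E : M.PlaneEmbedding)

theorem outOrbit_injective : Function.Injective E.outOrbit := fun c₁ c₂ h => by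
  rw [← E.outOrbit_comp c₁, ← E.outOrbit_comp c₂, h]

theorem mergeRel_functional (x y z : Unit ⊕ M.Faces E.rot) (hy : E.mergeRel x y)
    (hz : E.mergeRel x z) : y = z := by
  obtain ⟨c, rfl, rfl⟩ := hy
  obtain ⟨c', hc, rfl⟩ := hz
  rw [E.outOrbit_injective (Sum.inr_injective hc)]

noncomputable def nestingDepth : Unit ⊕ M.Faces E.rot → ℕ :=
  Sum.elim (fun _ => 0) fun F => E.depth (M.faceDartComp E.rot F) + 1

theorem nestingDepth_lt_of_mergeRel (x y : Unit ⊕ M.Faces E.rot) (h : E.mergeRel x y) :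
    E.nestingDepth y < E.nestingDepth x := by
  obtain ⟨c, rfl, rfl⟩ := h
  cases hc : E.encl c with
  | none => simp [nestingDepth]
  | some F => simpa [nestingDepth, E.outOrbit_comp] using E.encl_depth c F hc

theorem one_add_card_faces_le [Finite V] :
    1 + Nat.card (M.Faces E.rot) ≤ E.numFaces + M.edgeComponents := by
  have hsrc : Nat.card {x // ∃ y, E.mergeRel x y} ≤ M.edgeComponents :=
    Nat.card_le_card_of_surjective (fun c => ⟨Sum.inr (E.outOrbit c), _, c, rfl, rfl⟩)
      fun ⟨_, _, c, hc, _⟩ => ⟨c, Subtype.ext hc.symm⟩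
  have := card_le_card_quot_add_card E.mergeRel E.nestingDepth E.nestingDepth_lt_of_mergeRel
    E.mergeRel_functional
  rw [Nat.card_sum, Nat.card_unique] at this
  exact this.trans (Nat.add_le_add_left hsrc _)


def planeFaceOf (d : M.Dart) : E.PlaneFaces :=
  Quot.mk E.mergeRel (Sum.inr (Quotient.mk (cycleSetoid (M.facePerm E.rot)) d))

theorem facePerm_ne_self (d : M.Dart) : M.facePerm E.rot d ≠ d := by
  intro h
  have htail : (M.facePerm E.rot d).1.1 = d.1.2 := E.rot_tail _
  have hpos : 0 < M.mult d.1.1 d.1.2 := Fin.pos d.2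
  rw [h] at htail
  rw [htail, M.loopless] at hpos
  exact lt_irrefl 0 hpos

theorem faceDeg_eq (P : E.PlaneFaces) : E.faceDeg P = Nat.card {d // E.planeFaceOf d = P} := rfl

theorem planeFaceOf_facePerm (d : M.Dart) :
    E.planeFaceOf (M.facePerm E.rot d) = E.planeFaceOf d := by
  have : (M.facePerm E.rot).SameCycle (M.facePerm E.rot d) d :=
    Equiv.Perm.sameCycle_apply_left.2 (Equiv.Perm.SameCycle.refl _ _)
  rw [planeFaceOf, Quotient.sound (s := cycleSetoid (M.facePerm E.rot)) this, planeFaceOf]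

theorem planeFaceOf_surjective [Finite V] (hd : Nonempty M.Dart) :
    Function.Surjective E.planeFaceOf := by
  rintro ⟨x⟩
  rcases x with ⟨⟩ | F
  · have : Nonempty M.DartComp := ⟨⟨_, hd.some, rfl⟩⟩
    have : Finite M.DartComp := Subtype.finite
    obtain ⟨c, hc⟩ := Finite.exists_min E.depth
    have hnone : E.encl c = none := by
      cases h : E.encl c with
      | none => rfl
      | some F => exact absurd (hc _) (E.encl_depth c F h).not_ge
    obtain ⟨d, hd⟩ := Quotient.exists_rep (E.outOrbit c)
    exact ⟨d, Quot.sound ⟨c, by rw [hd], by simp [hnone]⟩⟩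
  · obtain ⟨d, rfl⟩ := Quotient.exists_rep F
    exact ⟨d, rfl⟩

theorem three_le_faceDeg [Finite V] (hE : E.NoTwoFaces) (hd : Nonempty M.Dart)
    (P : E.PlaneFaces) : 3 ≤ E.faceDeg P := by
  obtain ⟨d, rfl⟩ := E.planeFaceOf_surjective hd P
  have : Nontrivial {e // E.planeFaceOf e = E.planeFaceOf d} :=
    ⟨⟨d, rfl⟩, ⟨M.facePerm E.rot d, E.planeFaceOf_facePerm d⟩,
      fun h => E.facePerm_ne_self d (congrArg Subtype.val h).symm⟩
  have := Finite.one_lt_card (α := {e // E.planeFaceOf e = E.planeFaceOf d})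
  have := hE (E.planeFaceOf d)
  rw [faceDeg_eq] at *
  omega

theorem three_mul_numFaces_le [Finite V] (hE : E.NoTwoFaces) (hd : Nonempty M.Dart) :
    3 * E.numFaces ≤ Nat.card M.Dart := by
  have : Finite E.PlaneFaces := Quot.finite _
  have : Fintype E.PlaneFaces := Fintype.ofFinite _
  rw [← Nat.card_congr (Equiv.sigmaFiberEquiv E.planeFaceOf), Nat.card_sigma, numFaces,
    Nat.card_eq_fintype_card, ← Finset.card_univ, mul_comm, ← smul_eq_mul, ← Finset.sum_const]
  exact Finset.sum_le_sum fun P _ => E.three_le_faceDeg hE hd P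

/-- Euler's formula only sees the rounded-down `edgeCount = D / 2`; hence `9` rather than the
`12` of `D = 2m ≤ 6n - 12`. -/
theorem card_dart_add_nine_le [Finite V] (hE : E.NoTwoFaces) (hd : Nonempty M.Dart) :
    Nat.card M.Dart + 9 ≤ 6 * Nat.card V := by
  have hfaces := E.one_add_card_faces_le
  have hdarts := E.three_mul_numFaces_le hE hd
  have heuler := E.euler
  have hcomp : 1 ≤ M.components :=
    have : Nonempty M.support.ConnectedComponent := ⟨M.support.connectedComponentMk hd.some.1.1⟩
    Finite.card_pos
  unfold edgeCount at heuler
  omega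

end Multigraph.PlaneEmbedding

/-- every planar multigraph on `n ≥ 1` vertices admitting a plane
embedding without `2`-faces satisfies `a(M) ≥ n / 4 + 3 / 10`. -/
theorem forestNum_ge_quarter_add_three_tenths {V : Type} [Fintype V]
    (M : Multigraph V) (hn : 1 ≤ Nat.card V)
    (E : M.PlaneEmbedding) (hE : E.NoTwoFaces) :
    (Nat.card V : ℚ) / 4 + 3 / 10 ≤ M.forestNum := by
  obtain ⟨S, hS, hcard⟩ := M.exists_isInducedForest_twelve_mul_card_le
  have hforest := M.card_le_forestNum hS
  have hdarts : Nat.card M.Dart = 0 ∨ Nat.card M.Dart + 9 ≤ 6 * Nat.card V := by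
    rcases isEmpty_or_nonempty M.Dart with h | h
    · exact Or.inl Nat.card_of_isEmpty
    · exact Or.inr (E.card_dart_add_nine_le hE h)
  have key : 5 * Nat.card V + 6 ≤ 20 * M.forestNum := by omega
  have : (5 * Nat.card V + 6 : ℚ) ≤ 20 * M.forestNum := by exact_mod_cast key
  linarith
end

section
/- For every k ≥ 1 there exists a planar multigraph M_k on n_k = 7k + 1 vertices admitting a plane embedding without 2-faces such that a(M_k) = 3k + 1 = (3/7)n_k + 4/7. -/
/-! The witness is the paper's `M_k`: the disjoint union of `k - 1` doubled triangles and `k + 1`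
copies of `K₄`, so `7k + 1` vertices.  An induced forest meets a doubled triangle in at most one
vertex (any two are joined by a double edge) and a `K₄` in at most two (three span a triangle),
while one vertex of every doubled triangle and an edge of every `K₄` do form a forest; hence
`a(M_k) = (k - 1) + 2 (k + 1) = 3k + 1`.

The rotation systems of the two pieces are written out explicitly and their faces are checked by
evaluation: the only `2`-faces are the three bigons of each doubled triangle.  The components are
nested so that every bigon is either the outer face of its component, merged with the face that
component sits in, or contains another component; with two outermost components, every face of
the plane then has a dart besides the two of a bigon. -/

namespace Equiv.Perm

variable {α β : Type*} {σ : Perm α} {τ : Perm β} {x y : α}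

theorem SameCycle.map {g : α → β} (hg : Function.Semiconj g σ τ) (h : σ.SameCycle x y) :
    τ.SameCycle (g x) (g y) := by
  obtain ⟨n, rfl⟩ := h
  have hinv : Function.Semiconj g ⇑σ⁻¹ ⇑τ⁻¹ :=
    hg.inverses_right σ.apply_symm_apply τ.symm_apply_apply
  refine ⟨n, ?_⟩
  rcases n with n | n
  · simp only [Int.ofNat_eq_natCast, zpow_natCast, coe_pow, (hg.iterate_right n).eq]
  · simp only [zpow_negSucc, ← inv_pow, coe_pow, (hinv.iterate_right (n + 1)).eq]

theorem SameCycle.apply_eq_of_invariant {f : α → β} (hf : ∀ x, f (σ x) = f x)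
    (h : σ.SameCycle x y) : f x = f y :=
  sameCycle_one.mp (h.map (τ := 1) hf)

theorem sameCycle_of_pow_apply_eq {n : ℕ} (h : (σ ^ n) x = y) : σ.SameCycle x y :=
  ⟨n, by rwa [zpow_natCast]⟩

end Equiv.Perm

def Quot.equivOfRightInverse {α L : Type*} {r : α → α → Prop} (f : α → L) (s : L → α)
    (hf : ∀ a b, r a b → f a = f b) (hfs : Function.RightInverse s f)
    (hs : ∀ a, Quot.mk r (s (f a)) = Quot.mk r a) : Quot r ≃ L where
  toFun := Quot.lift f hf
  invFun l := Quot.mk r (s l)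
  left_inv := Quot.ind hs
  right_inv := hfs

theorem SimpleGraph.isAcyclic_of_adj_unique {W : Type*} {G : SimpleGraph W}
    (h : ∀ x y z, G.Adj x y → G.Adj x z → y = z) : G.IsAcyclic := by
  rw [isAcyclic_iff_forall_adj_isBridge]
  intro v w hvw
  rw [isBridge_iff]
  rintro ⟨p⟩
  cases p with
  | nil => exact G.loopless.irrefl v hvw
  | cons hadj q =>
      rw [deleteEdges_adj] at hadj
      obtain rfl := h _ _ _ hadj.1 hvw
      exact hadj.2 (by simp)

namespace Multigraph

variable {V : Type} {M : Multigraph V}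

theorem forestNum_eq {n : ℕ} {S : Finset V} (hS : M.IsInducedForest S) (hcard : S.card = n)
    (hmax : ∀ T, M.IsInducedForest T → T.card ≤ n) : M.forestNum = n :=
  IsGreatest.csSup_eq ⟨⟨S, hS, hcard⟩, by rintro _ ⟨T, hT, rfl⟩; exact hmax T hT⟩

theorem IsInducedForest.card_le_one_of_forall_two_le_mult {S T : Finset V} (hS : M.IsInducedForest S) (hTS : T ⊆ S)
    (hT : ∀ u ∈ T, ∀ v ∈ T, u ≠ v → 2 ≤ M.mult u v) : T.card ≤ 1 :=
  Finset.card_le_one.mpr fun u hu v hv => by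
    by_contra huv
    have := hS.1 u (hTS hu) v (hTS hv)
    have := hT u hu v hv huv
    omega

theorem IsInducedForest.card_le_two_of_isClique {S T : Finset V} (hS : M.IsInducedForest S)
    (hTS : T ⊆ S) (hT : M.support.IsClique (T : Set V)) : T.card ≤ 2 := by
  classical
  by_contra! h3
  obtain ⟨a, ha, b, hb, c, hc, hab, hac, hbc⟩ := Finset.two_lt_card.mp h3
  have hclique : (M.support.induce (S : Set V)).IsNClique 3
      ({⟨a, hTS ha⟩, ⟨b, hTS hb⟩, ⟨c, hTS hc⟩} : Finset (S : Set V)) :=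
    SimpleGraph.is3Clique_triple_iff.mpr
      ⟨hT ha hb hab, hT ha hc hac, hT hb hc hbc⟩
  exact hS.2.cliqueFree le_rfl _ hclique

theorem support_adj_of_dart (d : M.Dart) : M.support.Adj d.1.1 d.1.2 :=
  d.2.pos

section RotationSystem

variable {rot : Equiv.Perm M.Dart}

theorem facePerm_tail (hrot : ∀ d, (rot d).1.1 = d.1.1) (d : M.Dart) :
    (M.facePerm rot d).1.1 = d.1.2 :=
  hrot _

theorem facePerm_apply_ne (hrot : ∀ d, (rot d).1.1 = d.1.1) (d : M.Dart) :
    M.facePerm rot d ≠ d := fun h =>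
  (support_adj_of_dart d).ne (by rw [← facePerm_tail hrot d, h])

theorem faceDartComp_mk (hrot : ∀ d, (rot d).1.1 = d.1.1) (d : M.Dart) :
    (M.faceDartComp rot (Quotient.mk _ d)).1 = M.support.connectedComponentMk d.1.1 := by
  have hd : (M.facePerm rot).SameCycle (Quotient.mk (cycleSetoid _) d).out d :=
    Quotient.mk_out (s := cycleSetoid _) d
  refine hd.apply_eq_of_invariant (f := fun e => M.support.connectedComponentMk e.1.1) fun e => ?_
  rw [facePerm_tail hrot]
  exact (SimpleGraph.ConnectedComponent.sound (support_adj_of_dart e).reachable).symm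

end RotationSystem

namespace PlaneEmbedding

variable (E : M.PlaneEmbedding)

def planeFace (F : M.Faces E.rot) : E.PlaneFaces := Quot.mk _ (Sum.inr F)

theorem faceDeg_eq_s17 (Pf : E.PlaneFaces) :
    E.faceDeg Pf = Nat.card {d : M.Dart // E.planeFace (Quotient.mk _ d) = Pf} :=
  rfl

theorem planeFace_facePerm (d : M.Dart) :
    E.planeFace (Quotient.mk _ (M.facePerm E.rot d)) = E.planeFace (Quotient.mk _ d) :=
  congrArg E.planeFace (Quotient.sound (Equiv.Perm.SameCycle.refl _ d).apply_left)

theorem planeFace_outOrbit (c : M.DartComp) :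
    E.planeFace (E.outOrbit c) = Quot.mk _ ((E.encl c).elim (Sum.inl ()) Sum.inr) :=
  Quot.sound ⟨c, rfl, rfl⟩

theorem outOrbit_ne_of_encl_eq_some {c : M.DartComp} {F : M.Faces E.rot}
    (h : E.encl c = some F) : E.outOrbit c ≠ F := by
  rintro rfl
  have := E.encl_depth c _ h
  rw [E.outOrbit_comp] at this
  exact lt_irrefl _ this

theorem exists_ne_planeFace_eq
    (hroots : ∀ c, E.encl c = none → ∃ c', c' ≠ c ∧ E.encl c' = none) {F : M.Faces E.rot}
    (hF : (∃ c, E.outOrbit c = F) ∨ ∃ c, E.encl c = some F) :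
    ∃ F', F' ≠ F ∧ E.planeFace F' = E.planeFace F := by
  rcases hF with ⟨c, rfl⟩ | ⟨c, hc⟩
  · cases hc : E.encl c with
    | none =>
        obtain ⟨c', hne, hc'⟩ := hroots c hc
        refine ⟨E.outOrbit c', fun h => hne ?_, by
          rw [planeFace_outOrbit, planeFace_outOrbit, hc, hc']⟩
        simpa only [E.outOrbit_comp] using congrArg (M.faceDartComp E.rot) h
    | some F' =>
        exact ⟨F', (E.outOrbit_ne_of_encl_eq_some hc).symm, by rw [planeFace_outOrbit, hc]; rfl⟩
  · exact ⟨E.outOrbit c, E.outOrbit_ne_of_encl_eq_some hc, by rw [planeFace_outOrbit, hc]; rfl⟩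

theorem noTwoFaces_of_exists_third_dart [Finite V]
    (h : ∀ d, ∃ e, e ≠ d ∧ e ≠ M.facePerm E.rot d ∧
      E.planeFace (Quotient.mk _ e) = E.planeFace (Quotient.mk _ d)) :
    E.NoTwoFaces := by
  intro Pf hdeg
  rw [faceDeg_eq_s17] at hdeg
  obtain ⟨⟨d, rfl⟩⟩ : Nonempty {d : M.Dart // E.planeFace (Quotient.mk _ d) = Pf} :=
    (Nat.card_pos_iff.mp (by omega)).1
  obtain ⟨e, hed, hef, he⟩ := h d
  set Pd := {x | E.planeFace (Quotient.mk _ x) = E.planeFace (Quotient.mk _ d)}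
  have hsub : ({e, d, M.facePerm E.rot d} : Set M.Dart) ⊆ Pd := by
    rintro x (rfl | rfl | rfl)
    · exact he
    · rfl
    · exact E.planeFace_facePerm d
  have h3 : 3 ≤ Pd.ncard :=
    calc 3 = ({e, d, M.facePerm E.rot d} : Set M.Dart).ncard :=
          (Set.ncard_eq_three.mpr
            ⟨e, d, _, hed, hef, (facePerm_apply_ne E.rot_tail d).symm, rfl⟩).symm
      _ ≤ Pd.ncard := Set.ncard_le_ncard hsub (Set.toFinite _)
  rw [← Nat.card_coe_set_eq] at h3
  exact absurd hdeg (by change ¬ Nat.card Pd = 2; omega)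

theorem noTwoFaces_of_bigons_nested [Finite V]
    (hbigon : ∀ d, M.facePerm E.rot (M.facePerm E.rot d) = d →
      (∃ c, E.outOrbit c = Quotient.mk _ d) ∨ ∃ c, E.encl c = some (Quotient.mk _ d))
    (hroots : ∀ c, E.encl c = none → ∃ c', c' ≠ c ∧ E.encl c' = none) :
    E.NoTwoFaces := by
  set φ := M.facePerm E.rot
  refine E.noTwoFaces_of_exists_third_dart fun d => ?_
  by_cases h2 : φ (φ d) = d
  · obtain ⟨F, hne, heq⟩ := E.exists_ne_planeFace_eq hroots (hbigon d h2)
    have hF : Quotient.mk _ F.out = F := Quotient.out_eq F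
    refine ⟨F.out, fun h => hne ?_, fun h => hne ?_, by rw [hF, heq]⟩
    · rw [← hF, h]
    · rw [← hF, h]
      exact Quotient.sound (Equiv.Perm.SameCycle.refl φ d).apply_left
  · refine ⟨φ (φ d), h2, fun h => facePerm_apply_ne E.rot_tail d (φ.injective h), ?_⟩
    rw [E.planeFace_facePerm, E.planeFace_facePerm]

end PlaneEmbedding

def doubledTriangle : Multigraph (Fin 3) where
  mult a b := if a = b then 0 else 2
  symm u v := by by_cases h : u = v <;> simp [h, eq_comm]
  loopless v := by simp

def tetrahedron : Multigraph (Fin 4) where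
  mult a b := if a = b then 0 else 1
  symm u v := by by_cases h : u = v <;> simp [h, eq_comm]
  loopless v := by simp

instance : DecidableEq doubledTriangle.Dart :=
  inferInstanceAs (DecidableEq (Σ p : Fin 3 × Fin 3, Fin (doubledTriangle.mult p.1 p.2)))
instance : Fintype doubledTriangle.Dart :=
  inferInstanceAs (Fintype (Σ p : Fin 3 × Fin 3, Fin (doubledTriangle.mult p.1 p.2)))
instance : DecidableEq tetrahedron.Dart :=
  inferInstanceAs (DecidableEq (Σ p : Fin 4 × Fin 4, Fin (tetrahedron.mult p.1 p.2)))
instance : Fintype tetrahedron.Dart :=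
  inferInstanceAs (Fintype (Σ p : Fin 4 × Fin 4, Fin (tetrahedron.mult p.1 p.2)))

namespace doubledTriangle

def dart (a b : Fin 3) (m : Fin 2) (h : doubledTriangle.mult a b = 2 := by decide) :
    doubledTriangle.Dart :=
  ⟨(a, b), Fin.cast h.symm m⟩

def rot : Equiv.Perm doubledTriangle.Dart :=
  [dart 0 1 0, dart 0 1 1, dart 0 2 0, dart 0 2 1].formPerm *
  [dart 1 0 0, dart 1 2 0, dart 1 2 1, dart 1 0 1].formPerm *
  [dart 2 0 0, dart 2 1 1, dart 2 1 0, dart 2 0 1].formPerm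

/-- `0` is the outer bigon, `1` and `2` are the inner bigons, `3` and `4` the triangles. -/
def faceLabel (d : doubledTriangle.Dart) : Fin 5 :=
  if d ∈ [dart 0 1 1, dart 1 0 0] then 0
  else if d ∈ [dart 0 2 1, dart 2 0 0] then 1
  else if d ∈ [dart 1 2 1, dart 2 1 0] then 2
  else if d ∈ [dart 0 1 0, dart 1 2 0, dart 2 0 1] then 3
  else 4

def faceRep (l : Fin 5) : doubledTriangle.Dart :=
  ![dart 0 1 1, dart 0 2 1, dart 1 2 1, dart 0 1 0, dart 0 2 0] l

theorem rot_tail : ∀ d, (rot d).1.1 = d.1.1 := by decide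

theorem rot_sameCycle :
    ∀ d e : doubledTriangle.Dart, d.1.1 = e.1.1 → ∃ n < 4, (rot ^ n) d = e := by
  decide

theorem faceLabel_facePerm :
    ∀ d, faceLabel (doubledTriangle.facePerm rot d) = faceLabel d := by
  decide

theorem faceLabel_faceRep : ∀ l, faceLabel (faceRep l) = l := by decide

theorem faceRep_sameCycle :
    ∀ d, ∃ n < 3, (doubledTriangle.facePerm rot ^ n) (faceRep (faceLabel d)) = d := by
  decide

theorem faceLabel_lt_three_of_bigon :
    ∀ d, doubledTriangle.facePerm rot (doubledTriangle.facePerm rot d) = d →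
      (faceLabel d : ℕ) < 3 := by
  decide

theorem exists_dart_tail : ∀ a, ∃ d : doubledTriangle.Dart, d.1.1 = a := by decide

theorem card_dart : Fintype.card doubledTriangle.Dart = 12 := by decide

end doubledTriangle

namespace tetrahedron

def dart (a b : Fin 4) (h : tetrahedron.mult a b = 1 := by decide) : tetrahedron.Dart :=
  ⟨(a, b), Fin.cast h.symm 0⟩

def rot : Equiv.Perm tetrahedron.Dart :=
  [dart 0 1, dart 0 2, dart 0 3].formPerm *
  [dart 1 0, dart 1 3, dart 1 2].formPerm *
  [dart 2 0, dart 2 1, dart 2 3].formPerm *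
  [dart 3 0, dart 3 2, dart 3 1].formPerm

/-- `0` is the outer face. -/
def faceLabel (d : tetrahedron.Dart) : Fin 4 :=
  if d ∈ [dart 0 1, dart 1 3, dart 3 0] then 0
  else if d ∈ [dart 0 2, dart 2 1, dart 1 0] then 1
  else if d ∈ [dart 0 3, dart 3 2, dart 2 0] then 2
  else 3

def faceRep (l : Fin 4) : tetrahedron.Dart := ![dart 0 1, dart 0 2, dart 0 3, dart 1 2] l

theorem mult_le_one (a b : Fin 4) : tetrahedron.mult a b ≤ 1 := by
  show (if a = b then 0 else 1) ≤ 1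
  split <;> omega

theorem rot_tail : ∀ d, (rot d).1.1 = d.1.1 := by decide

theorem rot_sameCycle :
    ∀ d e : tetrahedron.Dart, d.1.1 = e.1.1 → ∃ n < 3, (rot ^ n) d = e := by
  decide

theorem faceLabel_facePerm : ∀ d, faceLabel (tetrahedron.facePerm rot d) = faceLabel d := by
  decide

theorem faceLabel_faceRep : ∀ l, faceLabel (faceRep l) = l := by decide

theorem faceRep_sameCycle :
    ∀ d, ∃ n < 3, (tetrahedron.facePerm rot ^ n) (faceRep (faceLabel d)) = d := by
  decide

theorem facePerm_facePerm_ne :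
    ∀ d, tetrahedron.facePerm rot (tetrahedron.facePerm rot d) ≠ d := by
  decide

theorem exists_dart_tail : ∀ a, ∃ d : tetrahedron.Dart, d.1.1 = a := by decide

theorem card_dart : Fintype.card tetrahedron.Dart = 12 := by decide

end tetrahedron

-- Keeps definitional unfolding below from evaluating these explicit permutations (which times out).
attribute [irreducible] doubledTriangle.rot tetrahedron.rot

section GadgetUnion

variable (ι κ : Type)

abbrev GadgetVertex := (ι × Fin 3) ⊕ (κ × Fin 4)
abbrev GadgetDart := (ι × doubledTriangle.Dart) ⊕ (κ × tetrahedron.Dart)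
abbrev GadgetFace := (ι × Fin 5) ⊕ (κ × Fin 4)

def gadgetUnion [DecidableEq ι] [DecidableEq κ] : Multigraph (GadgetVertex ι κ) where
  mult
    | .inl (i, a), .inl (j, b) => if i = j then doubledTriangle.mult a b else 0
    | .inr (i, a), .inr (j, b) => if i = j then tetrahedron.mult a b else 0
    | _, _ => 0
  symm := by
    rintro (⟨i, a⟩ | ⟨i, a⟩) (⟨j, b⟩ | ⟨j, b⟩)
    · by_cases h : i = j
      · subst h; simp only [doubledTriangle.symm]
      · simp only [if_neg h, if_neg (Ne.symm h)]
    · rfl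
    · rfl
    · by_cases h : i = j
      · subst h; simp only [tetrahedron.symm]
      · simp only [if_neg h, if_neg (Ne.symm h)]
  loopless := by
    rintro (⟨i, a⟩ | ⟨i, a⟩) <;> simp [doubledTriangle.loopless, tetrahedron.loopless]

namespace gadgetUnion

variable {ι κ}

theorem card_vertex [Finite ι] [Finite κ] :
    Nat.card (GadgetVertex ι κ) = 3 * Nat.card ι + 4 * Nat.card κ := by
  simp [Nat.card_sum, Nat.card_prod, mul_comm]

def dartTail : GadgetDart ι κ → GadgetVertex ι κ :=
  Sum.map (Prod.map id fun d => d.1.1) (Prod.map id fun d => d.1.1)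

def localRev : GadgetDart ι κ → GadgetDart ι κ :=
  Sum.map (Prod.map id doubledTriangle.dartRev) (Prod.map id tetrahedron.dartRev)

def faceLabel : GadgetDart ι κ → GadgetFace ι κ :=
  Sum.map (Prod.map id doubledTriangle.faceLabel) (Prod.map id tetrahedron.faceLabel)

def faceRep : GadgetFace ι κ → GadgetDart ι κ :=
  Sum.map (Prod.map id doubledTriangle.faceRep) (Prod.map id tetrahedron.faceRep)

def vertexComponent : GadgetVertex ι κ → ι ⊕ κ := Sum.map Prod.fst Prod.fst

def componentRep : ι ⊕ κ → GadgetVertex ι κ := Sum.map (·, 0) (·, 0)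

def faceComponent : GadgetFace ι κ → ι ⊕ κ := Sum.map Prod.fst Prod.fst

def outerFace : ι ⊕ κ → GadgetFace ι κ := Sum.map (·, 0) (·, 0)

variable (ι κ) in
def localRot : Equiv.Perm (GadgetDart ι κ) :=
  (Equiv.prodCongr (.refl ι) doubledTriangle.rot).sumCongr
    (Equiv.prodCongr (.refl κ) tetrahedron.rot)

variable (ι κ) in
def localFacePerm : Equiv.Perm (GadgetDart ι κ) :=
  (Equiv.prodCongr (.refl ι) (doubledTriangle.facePerm doubledTriangle.rot)).sumCongr
    (Equiv.prodCongr (.refl κ) (tetrahedron.facePerm tetrahedron.rot))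

theorem faceLabel_localFacePerm (x : GadgetDart ι κ) :
    faceLabel (localFacePerm ι κ x) = faceLabel x := by
  rcases x with (⟨i, t⟩ | ⟨j, t⟩)
  · simp [faceLabel, localFacePerm, doubledTriangle.faceLabel_facePerm]
  · simp [faceLabel, localFacePerm, tetrahedron.faceLabel_facePerm]

def forestEmbedding : ι ⊕ (κ × Fin 2) ↪ GadgetVertex ι κ :=
  ⟨Sum.map (·, 0) (Prod.map id (Fin.castLE (by omega))),
    Sum.map_injective.mpr ⟨Prod.mk_left_injective 0,
      Function.injective_id.prodMap (Fin.castLE_injective _)⟩⟩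

variable (ι κ) in
def forestSet [Fintype ι] [Fintype κ] : Finset (GadgetVertex ι κ) :=
  Finset.univ.map forestEmbedding

theorem card_forestSet [Fintype ι] [Fintype κ] :
    (forestSet ι κ).card = Nat.card ι + 2 * Nat.card κ := by
  simp [forestSet, Nat.card_eq_fintype_card, mul_comm]

variable [DecidableEq ι] [DecidableEq κ]

@[simp] theorem mult_inl_inl (i j : ι) (a b : Fin 3) :
    (gadgetUnion ι κ).mult (.inl (i, a)) (.inl (j, b)) =
      if i = j then doubledTriangle.mult a b else 0 := rfl

@[simp] theorem mult_inr_inr (i j : κ) (a b : Fin 4) :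
    (gadgetUnion ι κ).mult (.inr (i, a)) (.inr (j, b)) =
      if i = j then tetrahedron.mult a b else 0 := rfl

@[simp] theorem mult_inl_inr (i : ι) (j : κ) (a : Fin 3) (b : Fin 4) :
    (gadgetUnion ι κ).mult (.inl (i, a)) (.inr (j, b)) = 0 := rfl

@[simp] theorem mult_inr_inl (i : ι) (j : κ) (a : Fin 3) (b : Fin 4) :
    (gadgetUnion ι κ).mult (.inr (j, b)) (.inl (i, a)) = 0 := rfl

variable (ι κ) in
def dartEquiv : GadgetDart ι κ ≃ (gadgetUnion ι κ).Dart where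
  toFun
    | .inl (i, ⟨(a, b), m⟩) => ⟨(.inl (i, a), .inl (i, b)), Fin.cast (by simp) m⟩
    | .inr (j, ⟨(a, b), m⟩) => ⟨(.inr (j, a), .inr (j, b)), Fin.cast (by simp) m⟩
  invFun
    | ⟨(.inl (i, a), .inl (j, b)), m⟩ =>
        if h : i = j then .inl (i, ⟨(a, b), Fin.cast (by simp [h]) m⟩)
        else (Fin.cast (by simp [h]) m).elim0
    | ⟨(.inr (i, a), .inr (j, b)), m⟩ =>
        if h : i = j then .inr (i, ⟨(a, b), Fin.cast (by simp [h]) m⟩)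
        else (Fin.cast (by simp [h]) m).elim0
    | ⟨(.inl _, .inr _), m⟩ => m.elim0
    | ⟨(.inr _, .inl _), m⟩ => m.elim0
  left_inv := by
    rintro (⟨i, ⟨⟨a, b⟩, m⟩⟩ | ⟨j, ⟨⟨a, b⟩, m⟩⟩) <;> simp only [↓reduceDIte] <;> rfl
  right_inv := by
    rintro ⟨⟨(⟨i, a⟩ | ⟨i, a⟩), (⟨j, b⟩ | ⟨j, b⟩)⟩, m⟩
    · by_cases h : i = j
      · subst h; simp only [↓reduceDIte]; rfl
      · exact absurd m.isLt (by simp [h])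
    · exact m.elim0
    · exact m.elim0
    · by_cases h : i = j
      · subst h; simp only [↓reduceDIte]; rfl
      · exact absurd m.isLt (by simp [h])

theorem dartEquiv_tail (x : GadgetDart ι κ) : (dartEquiv ι κ x).1.1 = dartTail x := by
  rcases x with (⟨i, ⟨⟨a, b⟩, m⟩⟩ | ⟨j, ⟨⟨a, b⟩, m⟩⟩) <;> rfl

theorem dartRev_dartEquiv (x : GadgetDart ι κ) :
    (gadgetUnion ι κ).dartRev (dartEquiv ι κ x) = dartEquiv ι κ (localRev x) := by
  rcases x with (⟨i, ⟨⟨a, b⟩, m⟩⟩ | ⟨j, ⟨⟨a, b⟩, m⟩⟩) <;>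
    simp only [dartRev, dartEquiv, localRev, Sum.map_inl, Sum.map_inr, Equiv.coe_fn_mk] <;> rfl

variable (ι κ) in
def rot : Equiv.Perm (gadgetUnion ι κ).Dart := (dartEquiv ι κ).permCongr (localRot ι κ)

theorem rot_dartEquiv (x : GadgetDart ι κ) :
    rot ι κ (dartEquiv ι κ x) = dartEquiv ι κ (localRot ι κ x) := by
  simp [rot, Equiv.permCongr_apply]

theorem facePerm_dartEquiv (x : GadgetDart ι κ) :
    (gadgetUnion ι κ).facePerm (rot ι κ) (dartEquiv ι κ x) =
      dartEquiv ι κ (localFacePerm ι κ x) := by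
  change rot ι κ ((gadgetUnion ι κ).dartRev _) = _
  rw [dartRev_dartEquiv, rot_dartEquiv]
  rcases x with (⟨i, t⟩ | ⟨j, t⟩) <;> rfl

theorem rot_tail (d : (gadgetUnion ι κ).Dart) : (rot ι κ d).1.1 = d.1.1 := by
  obtain ⟨x, rfl⟩ := (dartEquiv ι κ).surjective d
  rw [rot_dartEquiv, dartEquiv_tail, dartEquiv_tail]
  rcases x with (⟨i, t⟩ | ⟨j, t⟩) <;>
    simp [localRot, dartTail, doubledTriangle.rot_tail, tetrahedron.rot_tail]

theorem rot_sameCycle (d e : (gadgetUnion ι κ).Dart) (h : d.1.1 = e.1.1) :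
    (rot ι κ).SameCycle d e := by
  obtain ⟨x, rfl⟩ := (dartEquiv ι κ).surjective d
  obtain ⟨y, rfl⟩ := (dartEquiv ι κ).surjective e
  rw [dartEquiv_tail, dartEquiv_tail] at h
  rcases x with (⟨i, t⟩ | ⟨i, t⟩) <;> rcases y with (⟨j, s⟩ | ⟨j, s⟩) <;>
    simp only [dartTail, Sum.map_inl, Sum.map_inr, Prod.map, id, Sum.inl.injEq, Sum.inr.injEq,
      Prod.mk.injEq, reduceCtorEq] at h
  · obtain ⟨rfl, h⟩ := h
    obtain ⟨n, -, hn⟩ := doubledTriangle.rot_sameCycle t s h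
    exact (Equiv.Perm.sameCycle_of_pow_apply_eq hn).map
      (g := fun t => dartEquiv ι κ (.inl (i, t))) fun t => (rot_dartEquiv (.inl (i, t))).symm
  · obtain ⟨rfl, h⟩ := h
    obtain ⟨n, -, hn⟩ := tetrahedron.rot_sameCycle t s h
    exact (Equiv.Perm.sameCycle_of_pow_apply_eq hn).map
      (g := fun t => dartEquiv ι κ (.inr (i, t))) fun t => (rot_dartEquiv (.inr (i, t))).symm

theorem sameCycle_faceRep_faceLabel (x : GadgetDart ι κ) :
    ((gadgetUnion ι κ).facePerm (rot ι κ)).SameCycle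
      (dartEquiv ι κ (faceRep (faceLabel x))) (dartEquiv ι κ x) := by
  rcases x with (⟨i, t⟩ | ⟨j, t⟩)
  · obtain ⟨n, -, hn⟩ := doubledTriangle.faceRep_sameCycle t
    exact (Equiv.Perm.sameCycle_of_pow_apply_eq hn).map
      (g := fun t => dartEquiv ι κ (.inl (i, t)))
      fun t => (facePerm_dartEquiv (.inl (i, t))).symm
  · obtain ⟨n, -, hn⟩ := tetrahedron.faceRep_sameCycle t
    exact (Equiv.Perm.sameCycle_of_pow_apply_eq hn).map
      (g := fun t => dartEquiv ι κ (.inr (j, t)))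
      fun t => (facePerm_dartEquiv (.inr (j, t))).symm

variable (ι κ) in
def faceEquiv : (gadgetUnion ι κ).Faces (rot ι κ) ≃ GadgetFace ι κ :=
  Quot.equivOfRightInverse (r := ((gadgetUnion ι κ).facePerm (rot ι κ)).SameCycle)
    (fun d => faceLabel ((dartEquiv ι κ).symm d))
    (fun l => dartEquiv ι κ (faceRep l))
    (fun _ _ h => h.apply_eq_of_invariant (f := fun d => faceLabel ((dartEquiv ι κ).symm d))
      fun d => by
        obtain ⟨x, rfl⟩ := (dartEquiv ι κ).surjective d
        simp only [facePerm_dartEquiv, Equiv.symm_apply_apply, faceLabel_localFacePerm])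
    (by
      rintro (⟨i, l⟩ | ⟨j, l⟩)
      · simp [faceLabel, faceRep, doubledTriangle.faceLabel_faceRep]
      · simp [faceLabel, faceRep, tetrahedron.faceLabel_faceRep])
    (fun d => Quot.sound <| by
      obtain ⟨x, rfl⟩ := (dartEquiv ι κ).surjective d
      simpa only [Equiv.symm_apply_apply] using sameCycle_faceRep_faceLabel x)

theorem mk_dartEquiv (x : GadgetDart ι κ) :
    (Quotient.mk _ (dartEquiv ι κ x) : (gadgetUnion ι κ).Faces (rot ι κ)) =
      (faceEquiv ι κ).symm (faceLabel x) :=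
  (faceEquiv ι κ).eq_symm_apply.mpr (congrArg faceLabel ((dartEquiv ι κ).symm_apply_apply x))

theorem faceEquiv_symm_apply (l : GadgetFace ι κ) :
    (faceEquiv ι κ).symm l = Quotient.mk _ (dartEquiv ι κ (faceRep l)) :=
  rfl

theorem vertexComponent_eq_of_adj {u v : GadgetVertex ι κ}
    (h : (gadgetUnion ι κ).support.Adj u v) : vertexComponent u = vertexComponent v := by
  rcases u with (⟨i, a⟩ | ⟨i, a⟩) <;> rcases v with (⟨j, b⟩ | ⟨j, b⟩) <;>
    simp only [support, mult_inl_inl, mult_inr_inr, mult_inl_inr, mult_inr_inl] at h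
  · by_cases hij : i = j
    · simp [vertexComponent, hij]
    · simp [hij] at h
  · simp at h
  · simp at h
  · by_cases hij : i = j
    · simp [vertexComponent, hij]
    · simp [hij] at h

theorem vertexComponent_eq_of_reachable {u v : GadgetVertex ι κ}
    (h : (gadgetUnion ι κ).support.Reachable u v) : vertexComponent u = vertexComponent v := by
  obtain ⟨p⟩ := h
  induction p with
  | nil => rfl
  | cons hadj _ ih => exact (vertexComponent_eq_of_adj hadj).trans ih

theorem reachable_componentRep (v : GadgetVertex ι κ) :
    (gadgetUnion ι κ).support.Reachable (componentRep (vertexComponent v)) v := by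
  rcases v with (⟨i, a⟩ | ⟨i, a⟩) <;> by_cases h : a = 0
  · subst h; rfl
  · exact SimpleGraph.Adj.reachable
      (by simp [support, componentRep, vertexComponent, doubledTriangle, Ne.symm h])
  · subst h; rfl
  · exact SimpleGraph.Adj.reachable
      (by simp [support, componentRep, vertexComponent, tetrahedron, Ne.symm h])

variable (ι κ) in
def componentEquiv : (gadgetUnion ι κ).support.ConnectedComponent ≃ ι ⊕ κ :=
  Quot.equivOfRightInverse vertexComponent componentRep
    (fun _ _ h => vertexComponent_eq_of_reachable h) (by rintro (i | j) <;> rfl)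
    (fun v => SimpleGraph.ConnectedComponent.sound (reachable_componentRep v))

theorem exists_dart_tail (v : GadgetVertex ι κ) :
    ∃ d : (gadgetUnion ι κ).Dart, d.1.1 = v := by
  rcases v with (⟨i, a⟩ | ⟨j, a⟩)
  · obtain ⟨t, ht⟩ := doubledTriangle.exists_dart_tail a
    exact ⟨dartEquiv ι κ (.inl (i, t)), by simp [dartEquiv_tail, dartTail, ht]⟩
  · obtain ⟨t, ht⟩ := tetrahedron.exists_dart_tail a
    exact ⟨dartEquiv ι κ (.inr (j, t)), by simp [dartEquiv_tail, dartTail, ht]⟩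

theorem exists_dart_of_component (c : (gadgetUnion ι κ).support.ConnectedComponent) :
    ∃ d : (gadgetUnion ι κ).Dart, (gadgetUnion ι κ).support.connectedComponentMk d.1.1 = c := by
  obtain ⟨v, rfl⟩ := c.exists_rep
  obtain ⟨d, hd⟩ := exists_dart_tail v
  exact ⟨d, by rw [hd]; rfl⟩

variable (ι κ) in
def dartCompEquiv : (gadgetUnion ι κ).DartComp ≃ ι ⊕ κ :=
  (Equiv.subtypeUnivEquiv exists_dart_of_component).trans (componentEquiv ι κ)

theorem dartCompEquiv_apply (c : (gadgetUnion ι κ).DartComp) :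
    dartCompEquiv ι κ c = componentEquiv ι κ c.1 :=
  rfl

theorem dartCompEquiv_faceDartComp (l : GadgetFace ι κ) :
    dartCompEquiv ι κ ((gadgetUnion ι κ).faceDartComp (rot ι κ) ((faceEquiv ι κ).symm l)) =
      faceComponent l := by
  rw [faceEquiv_symm_apply, dartCompEquiv_apply, faceDartComp_mk rot_tail, dartEquiv_tail]
  rcases l with (⟨i, l⟩ | ⟨j, l⟩) <;> rfl

theorem euler [Finite ι] [Finite κ] :
    Nat.card (GadgetVertex ι κ) + Nat.card ((gadgetUnion ι κ).Faces (rot ι κ)) =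
      (gadgetUnion ι κ).edgeCount + (gadgetUnion ι κ).components +
        (gadgetUnion ι κ).edgeComponents := by
  have hdart : Nat.card (gadgetUnion ι κ).Dart = 12 * Nat.card ι + 12 * Nat.card κ := by
    rw [← Nat.card_congr (dartEquiv ι κ), Nat.card_sum, Nat.card_prod, Nat.card_prod,
      Nat.card_eq_fintype_card (α := doubledTriangle.Dart), doubledTriangle.card_dart,
      Nat.card_eq_fintype_card (α := tetrahedron.Dart), tetrahedron.card_dart]
    ring
  have hface :
      Nat.card ((gadgetUnion ι κ).Faces (rot ι κ)) = 5 * Nat.card ι + 4 * Nat.card κ := by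
    simp [Nat.card_congr (faceEquiv ι κ), Nat.card_sum, Nat.card_prod, mul_comm]
  have hcomp : (gadgetUnion ι κ).components = Nat.card ι + Nat.card κ := by
    rw [components, Nat.card_congr (componentEquiv ι κ), Nat.card_sum]
  have hdcomp : (gadgetUnion ι κ).edgeComponents = Nat.card ι + Nat.card κ :=
    (Nat.card_congr (dartCompEquiv ι κ)).trans Nat.card_sum
  rw [card_vertex, hface, edgeCount, hdart, hcomp, hdcomp]
  omega

variable (ι κ) in
def embedding [Finite ι] [Finite κ] (encl : ι ⊕ κ → Option (GadgetFace ι κ))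
    (depth : ι ⊕ κ → ℕ) (hdepth : ∀ c l, encl c = some l → depth (faceComponent l) < depth c) :
    (gadgetUnion ι κ).PlaneEmbedding where
  rot := rot ι κ
  rot_tail := rot_tail
  rot_cyclic := rot_sameCycle
  outOrbit c := (faceEquiv ι κ).symm (outerFace (dartCompEquiv ι κ c))
  outOrbit_comp c := (dartCompEquiv ι κ).injective <| by
    rw [dartCompEquiv_faceDartComp]
    rcases dartCompEquiv ι κ c with i | j <;> rfl
  encl c := (encl (dartCompEquiv ι κ c)).map (faceEquiv ι κ).symm
  depth c := depth (dartCompEquiv ι κ c)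
  encl_depth c F h := by
    obtain ⟨l, hl, rfl⟩ := Option.map_eq_some_iff.mp h
    simpa only [dartCompEquiv_faceDartComp] using hdepth _ l hl
  euler := euler

theorem embedding_noTwoFaces [Finite ι] [Finite κ] {encl : ι ⊕ κ → Option (GadgetFace ι κ)}
    {depth : ι ⊕ κ → ℕ} {hdepth : ∀ c l, encl c = some l → depth (faceComponent l) < depth c}
    (hbigon : ∀ i (m : Fin 5), (m : ℕ) < 3 →
      (∃ c : ι ⊕ κ, outerFace c = .inl (i, m)) ∨ ∃ c, encl c = some (.inl (i, m)))
    (hroots : ∀ c, encl c = none → ∃ c', c' ≠ c ∧ encl c' = none) :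
    (embedding ι κ encl depth hdepth).NoTwoFaces := by
  refine PlaneEmbedding.noTwoFaces_of_bigons_nested _ (fun d hd => ?_) (fun c hc => ?_)
  · obtain ⟨x, rfl⟩ := (dartEquiv ι κ).surjective d
    change (gadgetUnion ι κ).facePerm (rot ι κ) ((gadgetUnion ι κ).facePerm (rot ι κ) _) = _ at hd
    rw [facePerm_dartEquiv, facePerm_dartEquiv, (dartEquiv ι κ).apply_eq_iff_eq] at hd
    change (∃ c, _ = (Quotient.mk _ (dartEquiv ι κ x) : (gadgetUnion ι κ).Faces (rot ι κ))) ∨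
      ∃ c, _ = some (Quotient.mk _ (dartEquiv ι κ x) : (gadgetUnion ι κ).Faces (rot ι κ))
    rw [mk_dartEquiv]
    rcases x with ⟨i, t⟩ | ⟨j, t⟩
    · have hlt := doubledTriangle.faceLabel_lt_three_of_bigon t
        (by simpa [localFacePerm] using hd)
      rcases hbigon i _ hlt with ⟨c, hc⟩ | ⟨c, hc⟩
      · exact .inl ⟨(dartCompEquiv ι κ).symm c,
          by simp only [embedding, Equiv.apply_symm_apply, hc]; rfl⟩
      · exact .inr ⟨(dartCompEquiv ι κ).symm c,
          by simp only [embedding, Equiv.apply_symm_apply, hc]; rfl⟩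
    · exact absurd (by simpa [localFacePerm] using hd) (tetrahedron.facePerm_facePerm_ne t)
  · obtain ⟨c', hne, hc'⟩ := hroots (dartCompEquiv ι κ c) (by simpa [embedding] using hc)
    exact ⟨(dartCompEquiv ι κ).symm c', by rintro rfl; simp at hne, by simp [embedding, hc']⟩

theorem card_fiber_le (S : Finset (GadgetVertex ι κ)) (hS : (gadgetUnion ι κ).IsInducedForest S)
    (c : ι ⊕ κ) :
    (S.filter (vertexComponent · = c)).card ≤ Sum.elim (fun _ => 1) (fun _ => 2) c := by
  rcases c with i | j
  · refine hS.card_le_one_of_forall_two_le_mult (Finset.filter_subset _ _) ?_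
    simp only [Finset.mem_filter]
    rintro (⟨i', a⟩ | ⟨_, _⟩) ⟨-, hu⟩ (⟨i'', b⟩ | ⟨_, _⟩) ⟨-, hv⟩ huv <;>
      simp only [vertexComponent, Sum.map_inl, Sum.map_inr, Sum.inl.injEq, reduceCtorEq] at hu hv
    subst hu hv
    have hab : a ≠ b := fun h => huv (h ▸ rfl)
    simp [doubledTriangle, hab]
  · refine hS.card_le_two_of_isClique (Finset.filter_subset _ _) ?_
    simp only [SimpleGraph.IsClique, Set.Pairwise, Finset.coe_filter, Set.mem_ofPred_eq]
    rintro (⟨_, _⟩ | ⟨j', a⟩) ⟨-, hu⟩ (⟨_, _⟩ | ⟨j'', b⟩) ⟨-, hv⟩ huv <;>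
      simp only [vertexComponent, Sum.map_inl, Sum.map_inr, Sum.inr.injEq, reduceCtorEq] at hu hv
    subst hu hv
    have hab : a ≠ b := fun h => huv (h ▸ rfl)
    simp [support, tetrahedron, hab]

theorem card_le_of_isInducedForest [Fintype ι] [Fintype κ] (S : Finset (GadgetVertex ι κ))
    (hS : (gadgetUnion ι κ).IsInducedForest S) : S.card ≤ Nat.card ι + 2 * Nat.card κ := by
  calc S.card = ∑ c, (S.filter (vertexComponent · = c)).card :=
        Finset.card_eq_sum_card_fiberwise fun _ _ => Finset.mem_univ _
    _ ≤ ∑ c : ι ⊕ κ, Sum.elim (fun _ => 1) (fun _ => 2) c :=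
        Finset.sum_le_sum fun c _ => card_fiber_le S hS c
    _ = Nat.card ι + 2 * Nat.card κ := by
        simp [Fintype.sum_sum_type, Nat.card_eq_fintype_card, mul_comm]

theorem support_adj_forestEmbedding {x y : ι ⊕ (κ × Fin 2)}
    (h : (gadgetUnion ι κ).support.Adj (forestEmbedding x) (forestEmbedding y)) :
    ∃ j a b, x = .inr (j, a) ∧ y = .inr (j, b) ∧ a ≠ b := by
  rcases x with i | ⟨j, a⟩ <;> rcases y with i' | ⟨j', b⟩
  · by_cases hi : i = i' <;> simp [support, forestEmbedding, hi] at h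
  · simp [support, forestEmbedding] at h
  · simp [support, forestEmbedding] at h
  · by_cases hj : j = j'
    · subst hj
      refine ⟨j, a, b, rfl, rfl, fun hab => ?_⟩
      subst hab
      simp [support, forestEmbedding] at h
    · simp [support, forestEmbedding, hj] at h

theorem isInducedForest_forestSet [Fintype ι] [Fintype κ] :
    (gadgetUnion ι κ).IsInducedForest (forestSet ι κ) := by
  constructor
  · simp only [forestSet, Finset.mem_map, Finset.mem_univ, true_and]
    rintro _ ⟨x, rfl⟩ _ ⟨y, rfl⟩
    rcases x with i | ⟨j, a⟩ <;> rcases y with i' | ⟨j', b⟩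
    · by_cases h : i = i' <;> simp [forestEmbedding, h, doubledTriangle.loopless]
    · simp [forestEmbedding]
    · simp [forestEmbedding]
    · change (gadgetUnion ι κ).mult (.inr (j, _)) (.inr (j', _)) ≤ 1
      rw [mult_inr_inr]
      split_ifs
      · exact tetrahedron.mult_le_one _ _
      · exact zero_le_one
  · refine SimpleGraph.isAcyclic_of_adj_unique ?_
    rintro ⟨_, hx⟩ ⟨_, hy⟩ ⟨_, hz⟩ hxy hxz
    simp only [forestSet, Finset.coe_map, Set.mem_image, Finset.coe_univ, Set.mem_univ,
      true_and] at hx hy hz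
    obtain ⟨x, rfl⟩ := hx
    obtain ⟨y, rfl⟩ := hy
    obtain ⟨z, rfl⟩ := hz
    obtain ⟨j, a, b, rfl, rfl, hab⟩ := support_adj_forestEmbedding hxy
    obtain ⟨j', a', c, hja, rfl, hac⟩ :=
      support_adj_forestEmbedding (x := .inr (j, a)) (y := z) hxz
    obtain ⟨rfl, rfl⟩ := Prod.mk.inj (Sum.inr_injective hja)
    obtain rfl : b = c := by omega
    rfl

end gadgetUnion

theorem forestNum_gadgetUnion [DecidableEq ι] [DecidableEq κ] [Fintype ι] [Fintype κ] :
    (gadgetUnion ι κ).forestNum = Nat.card ι + 2 * Nat.card κ :=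
  forestNum_eq gadgetUnion.isInducedForest_forestSet gadgetUnion.card_forestSet
    gadgetUnion.card_le_of_isInducedForest

end GadgetUnion

section Chain

variable (n : ℕ)

open gadgetUnion

/-- The nesting of the paper's `M_k` for `n = k - 1`: triangle `i + 1` and tetrahedron `i + 1`
lie in the inner bigons `1` and `2` of triangle `i`, the last tetrahedron in bigon `1` of the last
triangle; the remaining components are outermost. -/
def chainEncl : Fin n ⊕ Fin (n + 2) → Option (GadgetFace (Fin n) (Fin (n + 2)))
  | .inl i => if 0 < (i : ℕ) then some (.inl (⟨i - 1, by omega⟩, 1)) else none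
  | .inr j =>
      if h : 0 < (j : ℕ) ∧ (j : ℕ) ≤ n then some (.inl (⟨j - 1, by omega⟩, 2))
      else if h : 0 < n ∧ (j : ℕ) = n + 1 then some (.inl (⟨n - 1, by omega⟩, 1))
      else none

def chainDepth : Fin n ⊕ Fin (n + 2) → ℕ := Sum.elim (fun i => i + 1) (fun j => j + 1)

theorem chainEncl_depth (c : Fin n ⊕ Fin (n + 2)) (l : GadgetFace (Fin n) (Fin (n + 2)))
    (h : chainEncl n c = some l) : chainDepth n (faceComponent l) < chainDepth n c := by
  rcases c with i | j <;> simp only [chainEncl] at h <;> split_ifs at h <;> cases h <;>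
    simp only [chainDepth, faceComponent, Sum.map_inl, Sum.elim_inl, Sum.elim_inr] <;> omega

theorem chainEncl_bigon (i : Fin n) (m : Fin 5) (hm : (m : ℕ) < 3) :
    (∃ c : Fin n ⊕ Fin (n + 2), outerFace c = .inl (i, m)) ∨
      ∃ c, chainEncl n c = some (.inl (i, m)) := by
  rcases m with ⟨_ | _ | _ | m, hm5⟩
  · exact .inl ⟨.inl i, rfl⟩
  · right
    by_cases h : (i : ℕ) + 1 < n
    · exact ⟨.inl ⟨i + 1, h⟩, by simp [chainEncl]⟩
    · have hn : 0 < n := by omega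
      obtain rfl : i = ⟨n - 1, Nat.sub_one_lt_of_lt hn⟩ := Fin.ext (by simp only; omega)
      exact ⟨.inr ⟨n + 1, by omega⟩, by simp [chainEncl, hn]⟩
  · exact .inr ⟨.inr ⟨i + 1, by omega⟩, by simp [chainEncl]⟩
  · simp only at hm
    omega

theorem exists_ne_chainEncl_eq_none (c : Fin n ⊕ Fin (n + 2)) :
    ∃ c', c' ≠ c ∧ chainEncl n c' = none := by
  by_cases hc0 : c = .inr 0
  · subst hc0
    rcases n with _ | n
    · exact ⟨.inr 1, by simp, by simp [chainEncl]⟩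
    · exact ⟨.inl 0, by simp, by simp [chainEncl]⟩
  · exact ⟨.inr 0, Ne.symm hc0, by simp [chainEncl]⟩

def chainEmbedding : (gadgetUnion (Fin n) (Fin (n + 2))).PlaneEmbedding :=
  embedding _ _ (chainEncl n) (chainDepth n) (chainEncl_depth n)

theorem chainEmbedding_noTwoFaces : (chainEmbedding n).NoTwoFaces :=
  embedding_noTwoFaces (chainEncl_bigon n) fun c _ => exists_ne_chainEncl_eq_none n c

end Chain

end Multigraph

open Multigraph in
/-- for every `k ≥ 1` there is a planar multigraph on `7k + 1`
vertices admitting a plane embedding without `2`-faces whose maximum induced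
forest has exactly `3k + 1` vertices. -/
theorem construction_three_sevenths (k : ℕ) (hk : 1 ≤ k) :
    ∃ (V : Type) (_ : Fintype V) (M : Multigraph V) (E : M.PlaneEmbedding),
      E.NoTwoFaces ∧ Nat.card V = 7 * k + 1 ∧ M.forestNum = 3 * k + 1 := by
  obtain ⟨n, rfl⟩ : ∃ n, k = n + 1 := ⟨k - 1, by omega⟩
  refine ⟨GadgetVertex (Fin n) (Fin (n + 2)), inferInstance, gadgetUnion _ _, chainEmbedding n,
    chainEmbedding_noTwoFaces n, ?_, ?_⟩
  · rw [gadgetUnion.card_vertex]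
    simp only [Nat.card_eq_fintype_card, Fintype.card_fin]
    ring
  · rw [forestNum_gadgetUnion]
    simp only [Nat.card_eq_fintype_card, Fintype.card_fin]
    ring
end
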